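/- Fix a real number t with |t| < 2. Then the limit, as the real parameter c tends to +∞, of √c · ρ_c(√c · t) equals (1/(2π))·√(4 - t²); that is, the suitably rescaled Kesten–McKay densities converge pointwise on (-2, 2) to the density of the semicircle law. -/

import Mathlib

/-- The Kesten–McKay density `ρ_c`, extended by zero outside `[-2√c, 2√c]`. -/
noncomputable def kestenMcKayDensity (c t : ℝ) : ℝ :=
  if |t| ≤ 2 * Real.sqrt c then
    (1 + c) / (2 * Real.pi) * Real.sqrt (4 * c - t ^ 2) / ((1 + c) ^ 2 - t ^ 2)
  else 0

/-!
Substituting `√c · t` into `ρ_c` and pulling `√c` out of the square root gives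
`√c · ρ_c(√c t) = (1/(2π))√(4 - t²) · c(1 + c)/((1 + c)² - c t²)`, and the rational factor,
a quotient of two monic quadratics in `c`, tends to `1`.
-/

open Filter Topology

theorem sqrt_mul_kestenMcKayDensity_sqrt_mul {c t : ℝ} (hc : 0 ≤ c) (ht : |t| ≤ 2) :
    Real.sqrt c * kestenMcKayDensity c (Real.sqrt c * t) =
      1 / (2 * Real.pi) * Real.sqrt (4 - t ^ 2) * (c * (1 + c) / ((1 + c) ^ 2 - c * t ^ 2)) := by
  have hsq : (Real.sqrt c * t) ^ 2 = c * t ^ 2 := by rw [mul_pow, Real.sq_sqrt hc]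
  have hsupp : |Real.sqrt c * t| ≤ 2 * Real.sqrt c := by
    rw [abs_mul, abs_of_nonneg (Real.sqrt_nonneg c), mul_comm 2]
    exact mul_le_mul_of_nonneg_left ht (Real.sqrt_nonneg c)
  have hroot : Real.sqrt (4 * c - c * t ^ 2) = Real.sqrt c * Real.sqrt (4 - t ^ 2) := by
    rw [← Real.sqrt_mul hc]
    ring_nf
  rw [kestenMcKayDensity, if_pos hsupp, hsq, hroot]
  have hc' : Real.sqrt c * Real.sqrt c = c := Real.mul_self_sqrt hc
  linear_combination
    (1 + c) / (2 * Real.pi) * Real.sqrt (4 - t ^ 2) / ((1 + c) ^ 2 - c * t ^ 2) * hc'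

theorem tendsto_mul_one_add_div_one_add_sq_sub (s : ℝ) :
    Tendsto (fun c : ℝ => c * (1 + c) / ((1 + c) ^ 2 - c * s)) atTop (𝓝 1) := by
  have hcont : ContinuousAt (fun x : ℝ => (1 + x) / ((1 + x) ^ 2 - s * x)) 0 := by
    fun_prop (disch := norm_num)
  have hlim : Tendsto (fun x : ℝ => (1 + x) / ((1 + x) ^ 2 - s * x)) (𝓝 0) (𝓝 1) := by
    simpa using hcont.tendsto
  refine (hlim.comp tendsto_inv_atTop_zero).congr' ?_
  filter_upwards [eventually_gt_atTop 0] with c hc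
  have hc2 : (c⁻¹) ^ 2 ≠ 0 := by positivity
  rw [Function.comp_apply, ← mul_div_mul_left (c * (1 + c)) _ hc2]
  congr 1 <;> field_simp <;> ring

/-- For fixed `t` with `|t| < 2`, as `c → ∞` the rescaled Kesten–McKay densities
`√c · ρ_c(√c · t)` converge to the semicircle density `(1/(2π))√(4 - t²)`. -/
theorem stmt_15 (t : ℝ) (ht : |t| < 2) :
    Filter.Tendsto
      (fun c : ℝ => Real.sqrt c * kestenMcKayDensity c (Real.sqrt c * t))
      Filter.atTop (nhds (1 / (2 * Real.pi) * Real.sqrt (4 - t ^ 2))) := by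
  have hlim := (tendsto_mul_one_add_div_one_add_sq_sub (t ^ 2)).const_mul
    (1 / (2 * Real.pi) * Real.sqrt (4 - t ^ 2))
  rw [mul_one] at hlim
  refine hlim.congr' ?_
  filter_upwards [eventually_ge_atTop 0] with c hc
  exact (sqrt_mul_kestenMcKayDensity_sqrt_mul hc ht.le).symm
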